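/- arXiv:2405.03431 — 2 statements merged into one kernel-verified Lean document; each statement's English description precedes it below -/
import Mathlib

section
/- Let K ∈ (0,1/3), α ∈ (0,1), and c > 0. Then there exist T ≥ 1 and constants c₁, c₂ > 0 such that for all t ≥ T and all C¹ 2π-periodic functions v, L : ℝ → ℝ with sup_x |v(x)| ≤ 1/2, the corrected energy E_c[v,L](t) satisfies c₁·( ‖∂ₓv‖²_{L²} + ‖∂ₓL‖²_{L²} ) ≤ E_c[v,L](t) ≤ c₂·( ‖∂ₓv‖²_{L²} + ‖∂ₓL‖²_{L²} ), with L² norms over one period [0,2π]. -/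
open MeasureTheory

set_option maxHeartbeats 1000000

lemma cs_integral (f g : ℝ → ℝ) (a b : ℝ) (hab : a ≤ b) (hf : Continuous f)
    (hg : Continuous g) :
    (∫ x in a..b, f x * g x) ^ 2 ≤ (∫ x in a..b, f x ^ 2) * (∫ x in a..b, g x ^ 2) := by
  set A := ∫ x in a..b, f x ^ 2 with hAdef
  set B := ∫ x in a..b, g x ^ 2 with hBdef
  set C := ∫ x in a..b, f x * g x with hCdef
  have hA : 0 ≤ A := intervalIntegral.integral_nonneg hab (fun x _ => sq_nonneg _)
  have hB : 0 ≤ B := intervalIntegral.integral_nonneg hab (fun x _ => sq_nonneg _)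
  have key : ∀ t : ℝ, 0 ≤ t ^ 2 * A - 2 * t * C + B := by
    intro t
    have h0 : 0 ≤ ∫ x in a..b, (t * f x - g x) ^ 2 :=
      intervalIntegral.integral_nonneg hab (fun x _ => sq_nonneg _)
    have e1 : (∫ x in a..b, (t * f x - g x) ^ 2) = t ^ 2 * A - 2 * t * C + B := by
      have step : (∫ x in a..b, (t * f x - g x) ^ 2)
          = ∫ x in a..b, (t ^ 2 * f x ^ 2 - 2 * t * (f x * g x) + g x ^ 2) := by
        apply intervalIntegral.integral_congr
        intro x _; ring
      rw [step, intervalIntegral.integral_add, intervalIntegral.integral_sub,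
        intervalIntegral.integral_const_mul, intervalIntegral.integral_const_mul]
      · exact ((continuous_const.mul (hf.pow 2))).intervalIntegrable a b
      · exact ((continuous_const.mul (hf.mul hg))).intervalIntegrable a b
      · exact (((continuous_const.mul (hf.pow 2))).sub
          (continuous_const.mul (hf.mul hg))).intervalIntegrable a b
      · exact (hg.pow 2).intervalIntegrable a b
    linarith [h0, e1.symm ▸ h0]
  by_cases hA0 : A = 0
  · have hC0 : C = 0 := by
      by_contra hC
      have hC2 : 0 < C ^ 2 := by positivity
      have := key ((B + 1) * C / (2 * C ^ 2))
      rw [hA0] at this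
      have e : ((B + 1) * C / (2 * C ^ 2)) ^ 2 * 0 - 2 * ((B + 1) * C / (2 * C ^ 2)) * C + B
          = -1 := by field_simp; ring
      rw [e] at this
      linarith
    rw [hC0, hA0]; norm_num
  · have hA' : 0 < A := lt_of_le_of_ne hA (Ne.symm hA0)
    have h := key (C / A)
    have e : (C / A) ^ 2 * A - 2 * (C / A) * C + B = B - C ^ 2 / A := by
      field_simp; ring
    rw [e] at h
    have h2 : C ^ 2 / A ≤ B := by linarith
    calc C ^ 2 = C ^ 2 / A * A := by field_simp
      _ ≤ B * A := mul_le_mul_of_nonneg_right h2 hA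
      _ = A * B := mul_comm _ _


/-- The corrected energy functional
`E_c[v,L](t) = ½∫(∂ₓv)² + (K/(1+K)²)·½∫(1−v²)²(∂ₓL)² + c·t^(−(1−α))·∫ v·∂ₓL`. -/
noncomputable def correctedEnergy (K α c : ℝ) (v L : ℝ → ℝ) (t : ℝ) : ℝ :=
  (1 / 2) * (∫ x in (0:ℝ)..(2 * Real.pi), (deriv v x) ^ 2)
  + (K / (1 + K) ^ 2) * (1 / 2)
      * (∫ x in (0:ℝ)..(2 * Real.pi), (1 - (v x) ^ 2) ^ 2 * (deriv L x) ^ 2)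
  + c * t ^ (-(1 - α)) * (∫ x in (0:ℝ)..(2 * Real.pi), v x * deriv L x)

/-- For `t` large and `|v| ≤ 1/2`, the corrected energy is equivalent to the homogeneous
first-order Sobolev energy `‖∂ₓv‖²_{L²} + ‖∂ₓL‖²_{L²}`. -/
theorem correctedEnergy_equivalence (K α c : ℝ) (hK0 : 0 < K) (hK3 : K < 1 / 3)
    (hα0 : 0 < α) (hα1 : α < 1) (hc : 0 < c) :
    ∃ T, 1 ≤ T ∧ ∃ c₁ > (0:ℝ), ∃ c₂ > (0:ℝ), ∀ t, T ≤ t → ∀ v L : ℝ → ℝ,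
      ContDiff ℝ 1 v → ContDiff ℝ 1 L →
      (∀ x, v (x + 2 * Real.pi) = v x) → (∀ x, L (x + 2 * Real.pi) = L x) →
      (∀ x, |v x| ≤ 1 / 2) →
      c₁ * ((∫ x in (0:ℝ)..(2 * Real.pi), (deriv v x) ^ 2)
            + (∫ x in (0:ℝ)..(2 * Real.pi), (deriv L x) ^ 2))
        ≤ correctedEnergy K α c v L t
      ∧ correctedEnergy K α c v L t
        ≤ c₂ * ((∫ x in (0:ℝ)..(2 * Real.pi), (deriv v x) ^ 2)
            + (∫ x in (0:ℝ)..(2 * Real.pi), (deriv L x) ^ 2)) := by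
  have hπ : (0:ℝ) < Real.pi := Real.pi_pos
  set k : ℝ := K / (1 + K) ^ 2 with hkdef
  have hk : 0 < k := by positivity
  set m : ℝ := min (1/4 : ℝ) (9 * k / 64) with hmdef
  have hm : 0 < m := lt_min (by norm_num) (by positivity)
  have hm4 : m ≤ 1/4 := min_le_left _ _
  have hmk : m ≤ 9 * k / 64 := min_le_right _ _
  have hS : (0:ℝ) < Real.pi * c / m := by positivity
  refine ⟨max 1 ((Real.pi * c / m) ^ ((1:ℝ)/(1-α))), le_max_left _ _, m, hm,
    1/2 + k/2 + m, by positivity, ?_⟩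
  intro t ht v L hv hL hvp hLp hv2
  have ht1 : (1:ℝ) ≤ t := le_trans (le_max_left _ _) ht
  have ht0 : (0:ℝ) < t := by linarith
  -- smallness of the prefactor
  have hεπ : c * t ^ (-(1 - α)) * Real.pi ≤ m := by
    have h1α : (0:ℝ) < 1 - α := by linarith
    have h1 : Real.pi * c / m ≤ t ^ (1 - α) := by
      calc Real.pi * c / m = ((Real.pi * c / m) ^ ((1:ℝ)/(1-α))) ^ (1-α) := by
            rw [← Real.rpow_mul hS.le, one_div_mul_cancel (ne_of_gt h1α), Real.rpow_one]
          _ ≤ t ^ (1-α) := by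
            exact Real.rpow_le_rpow (Real.rpow_nonneg hS.le _)
              (le_trans (le_max_right _ _) ht) h1α.le
    have hp : 0 < t ^ (1 - α) := Real.rpow_pos_of_pos ht0 _
    have e : c * t ^ (-(1 - α)) * Real.pi = Real.pi * c / t ^ (1 - α) := by
      rw [Real.rpow_neg ht0.le]; ring
    rw [e, div_le_iff₀ hp]
    have := (div_le_iff₀ hm).mp h1
    nlinarith
  have hε0 : 0 < c * t ^ (-(1 - α)) := by positivity
  -- continuity facts
  have hvc : Continuous v := hv.continuous
  have hLc : Continuous L := hL.continuous
  have hv' : Continuous (deriv v) := hv.continuous_deriv le_rfl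
  have hL' : Continuous (deriv L) := hL.continuous_deriv le_rfl
  have h2π : (0:ℝ) ≤ 2 * Real.pi := by positivity
  set A := ∫ x in (0:ℝ)..(2 * Real.pi), (deriv v x) ^ 2 with hAdef
  set B := ∫ x in (0:ℝ)..(2 * Real.pi), (deriv L x) ^ 2 with hBdef
  set M := ∫ x in (0:ℝ)..(2 * Real.pi), (1 - (v x) ^ 2) ^ 2 * (deriv L x) ^ 2 with hMdef
  set C := ∫ x in (0:ℝ)..(2 * Real.pi), v x * deriv L x with hCdef
  have hA : 0 ≤ A := intervalIntegral.integral_nonneg h2π (fun x _ => sq_nonneg _)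
  have hB : 0 ≤ B := intervalIntegral.integral_nonneg h2π (fun x _ => sq_nonneg _)
  -- bounds on M
  have hMup : M ≤ B := by
    apply intervalIntegral.integral_mono_on h2π
      ((((continuous_const.sub (hvc.pow 2)).pow 2).mul (hL'.pow 2)).intervalIntegrable _ _)
      ((hL'.pow 2).intervalIntegrable _ _)
    intro x _
    have h := hv2 x
    have hsq : (v x) ^ 2 ≤ 1/4 := by
      have := abs_le.mp h
      nlinarith
    have h1 : (1 - (v x) ^ 2) ^ 2 ≤ 1 := by nlinarith [sq_nonneg (v x)]
    exact mul_le_of_le_one_left (sq_nonneg _) h1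
  have hMlow : (9/16 : ℝ) * B ≤ M := by
    have : (∫ x in (0:ℝ)..(2 * Real.pi), (9/16 : ℝ) * (deriv L x) ^ 2) ≤ M := by
      apply intervalIntegral.integral_mono_on h2π
        ((continuous_const.mul (hL'.pow 2)).intervalIntegrable _ _)
        ((((continuous_const.sub (hvc.pow 2)).pow 2).mul (hL'.pow 2)).intervalIntegrable _ _)
      intro x _
      have h := hv2 x
      have hsq : (v x) ^ 2 ≤ 1/4 := by
        have := abs_le.mp h
        nlinarith
      have h1 : (9:ℝ)/16 ≤ (1 - (v x) ^ 2) ^ 2 := by nlinarith [sq_nonneg (v x)]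
      exact mul_le_mul_of_nonneg_right h1 (sq_nonneg _)
    rwa [intervalIntegral.integral_const_mul] at this
  -- ∫ deriv L = 0
  have hLint : (∫ x in (0:ℝ)..(2*Real.pi), deriv L x) = 0 := by
    rw [intervalIntegral.integral_deriv_eq_sub
      (fun x _ => (hL.differentiable one_ne_zero).differentiableAt)
      (hL'.intervalIntegrable _ _)]
    have := hLp 0
    rw [zero_add] at this
    rw [this, sub_self]
  -- cross term bound
  have hCbound : |C| ≤ Real.pi * (A + B) := by
    -- C = ∫ (v x - v 0) * deriv L x
    have hCeq : C = ∫ x in (0:ℝ)..(2*Real.pi), (v x - v 0) * deriv L x := by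
      rw [hCdef]
      have : (∫ x in (0:ℝ)..(2*Real.pi), (v x - v 0) * deriv L x)
          = (∫ x in (0:ℝ)..(2*Real.pi), v x * deriv L x)
            - v 0 * ∫ x in (0:ℝ)..(2*Real.pi), deriv L x := by
        rw [← intervalIntegral.integral_const_mul, ← intervalIntegral.integral_sub (f := fun x => v x * deriv L x) (g := fun x => v 0 * deriv L x)
          ((hvc.mul hL').intervalIntegrable _ _)
          ((continuous_const.mul hL').intervalIntegrable _ _)]
        apply intervalIntegral.integral_congr
        intro x _; ring
      rw [this, hLint, mul_zero, sub_zero]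
    -- pointwise bound (v x - v 0)^2 ≤ 2π A on [0, 2π]
    have hpt : ∀ x ∈ Set.Icc (0:ℝ) (2*Real.pi), (v x - v 0) ^ 2 ≤ 2 * Real.pi * A := by
      intro x hx
      obtain ⟨hx0, hx2⟩ := hx
      have hftc : v x - v 0 = ∫ y in (0:ℝ)..x, deriv v y := by
        rw [intervalIntegral.integral_deriv_eq_sub
          (fun y _ => (hv.differentiable one_ne_zero).differentiableAt)
          (hv'.intervalIntegrable _ _)]
      have hcs : (∫ y in (0:ℝ)..x, deriv v y * 1) ^ 2
          ≤ (∫ y in (0:ℝ)..x, (deriv v y) ^ 2) * (∫ y in (0:ℝ)..x, (1:ℝ) ^ 2) :=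
        cs_integral _ _ _ _ hx0 hv' continuous_const
      have hsub : (∫ y in (0:ℝ)..x, (deriv v y) ^ 2) ≤ A := by
        have hadd : (∫ y in (0:ℝ)..x, (deriv v y) ^ 2)
              + (∫ y in x..(2*Real.pi), (deriv v y) ^ 2)
            = ∫ y in (0:ℝ)..(2*Real.pi), (deriv v y) ^ 2 :=
          intervalIntegral.integral_add_adjacent_intervals
            ((hv'.pow 2).intervalIntegrable (0:ℝ) x) ((hv'.pow 2).intervalIntegrable x (2*Real.pi))
        have hnn : 0 ≤ ∫ y in x..(2*Real.pi), (deriv v y) ^ 2 :=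
          intervalIntegral.integral_nonneg hx2 (fun y _ => sq_nonneg _)
        rw [hAdef]
        linarith [hadd]
      have hnn0 : 0 ≤ ∫ y in (0:ℝ)..x, (deriv v y) ^ 2 :=
        intervalIntegral.integral_nonneg hx0 (fun y _ => sq_nonneg _)
      have hone : (∫ y in (0:ℝ)..x, (1:ℝ) ^ 2) = x := by simp
      rw [hone] at hcs
      simp only [mul_one] at hcs
      rw [hftc]
      nlinarith
    -- ∫ (v - v0)^2 ≤ 4π² A
    have hD : (∫ x in (0:ℝ)..(2*Real.pi), (v x - v 0) ^ 2) ≤ 2 * Real.pi * (2 * Real.pi * A) := by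
      have : (∫ x in (0:ℝ)..(2*Real.pi), (v x - v 0) ^ 2)
          ≤ ∫ _x in (0:ℝ)..(2*Real.pi), 2 * Real.pi * A := by
        apply intervalIntegral.integral_mono_on h2π
          (((hvc.sub continuous_const).pow 2).intervalIntegrable _ _)
          (continuous_const.intervalIntegrable _ _)
        exact hpt
      simpa using this
    have hDnn : 0 ≤ ∫ x in (0:ℝ)..(2*Real.pi), (v x - v 0) ^ 2 :=
      intervalIntegral.integral_nonneg h2π (fun x _ => sq_nonneg _)
    have hcs2 : C ^ 2 ≤ (∫ x in (0:ℝ)..(2*Real.pi), (v x - v 0) ^ 2) * B := by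
      rw [hCeq]
      exact cs_integral _ _ _ _ h2π (hvc.sub continuous_const) hL'
    have hC2 : C ^ 2 ≤ (Real.pi * (A + B)) ^ 2 := by
      nlinarith [mul_le_mul_of_nonneg_right hD hB,
        mul_nonneg (mul_nonneg hπ.le hπ.le) (sq_nonneg (A - B))]
    have habs : |C| ≤ |Real.pi * (A + B)| := by
      have := Real.sqrt_le_sqrt hC2
      rwa [Real.sqrt_sq_eq_abs, Real.sqrt_sq_eq_abs] at this
    rwa [abs_of_nonneg (by positivity : (0:ℝ) ≤ Real.pi * (A + B))] at habs
  -- conclude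
  have hcross : |c * t ^ (-(1 - α)) * C| ≤ m * (A + B) := by
    rw [abs_mul, abs_of_nonneg hε0.le]
    calc c * t ^ (-(1 - α)) * |C| ≤ c * t ^ (-(1 - α)) * (Real.pi * (A + B)) :=
          mul_le_mul_of_nonneg_left hCbound hε0.le
      _ = (c * t ^ (-(1 - α)) * Real.pi) * (A + B) := by ring
      _ ≤ m * (A + B) := mul_le_mul_of_nonneg_right hεπ (by linarith)
  have habs' := abs_le.mp hcross
  unfold correctedEnergy
  rw [← hAdef, ← hMdef, ← hCdef, ← hkdef]
  constructor
  · nlinarith [habs'.1, hA, hB,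
      mul_le_mul_of_nonneg_right hm4 hA, mul_le_mul_of_nonneg_right hmk hB,
      mul_le_mul_of_nonneg_left hMlow (le_of_lt hk)]
  · nlinarith [habs'.2, hA, hB, mul_le_mul_of_nonneg_left hMup (le_of_lt hk),
      mul_nonneg (le_of_lt hk) hA, mul_nonneg (le_of_lt hk) hB,
      mul_nonneg (le_of_lt hm) hA, mul_nonneg (le_of_lt hm) hB]
end

section
/- Let 0 < α < 1/2, y > 0, x₀ ∈ ℝ, and let x : [1,T) → ℝ be differentiable with x(1) = x₀ and ẋ(t) = y·t^{−2α} / √(1 + y²·t^{−2α}) for all t ∈ [1,T). Then for all t ∈ [1,T): x₀ + (y/√(1 + y²))·(t^{1−2α} − 1)/(1 − 2α) ≤ x(t) ≤ x₀ + y·(t^{1−2α} − 1)/(1 − 2α). In particular, if x₁ < x₂ and u₁ > u₂ > 0 satisfy u₁/√(1 + u₁²) > u₂, then the lower envelope of the characteristic starting at (x₁, u₁) exceeds the upper envelope of the characteristic starting at (x₂, u₂) after a finite time. -/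
private lemma deriv_le_of_le_aux {f g f' g' : ℝ → ℝ} {a b : ℝ} (hab : a ≤ b)
    (hf : ∀ s ∈ Set.Icc a b, HasDerivAt f (f' s) s)
    (hg : ∀ s ∈ Set.Icc a b, HasDerivAt g (g' s) s)
    (hle : ∀ s ∈ Set.Icc a b, f' s ≤ g' s)
    (h0 : f a ≤ g a) : f b ≤ g b := by
  have hmono : MonotoneOn (fun s => g s - f s) (Set.Icc a b) := by
    apply monotoneOn_of_deriv_nonneg (convex_Icc a b)
    · exact ContinuousOn.sub (fun s hs => (hg s hs).continuousAt.continuousWithinAt)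
        (fun s hs => (hf s hs).continuousAt.continuousWithinAt)
    · intro s hs
      rw [interior_Icc] at hs
      exact (((hg s (Set.mem_Icc_of_Ioo hs)).sub
        (hf s (Set.mem_Icc_of_Ioo hs))).differentiableAt).differentiableWithinAt
    · intro s hs
      rw [interior_Icc] at hs
      have hd := (hg s (Set.mem_Icc_of_Ioo hs)).sub (hf s (Set.mem_Icc_of_Ioo hs))
      rw [show deriv (fun s => g s - f s) s = g' s - f' s from hd.deriv]
      have := hle s (Set.mem_Icc_of_Ioo hs)
      linarith
  have := hmono (Set.left_mem_Icc.mpr hab) (Set.right_mem_Icc.mpr hab) hab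
  dsimp only at this
  linarith

/-- Envelopes of dust characteristics for `0 < α < 1/2`: a solution of
`ẋ(t) = y·t^{−2α}/√(1 + y²·t^{−2α})`, `x(1) = x₀`, is squeezed between
`x₀ + (y/√(1+y²))·(t^{1−2α}−1)/(1−2α)` and `x₀ + y·(t^{1−2α}−1)/(1−2α)`;
in particular if `u₁/√(1+u₁²) > u₂` the lower envelope from `(x₁,u₁)` overtakes the
upper envelope from `(x₂,u₂)` after a finite time. -/
theorem dust_characteristic_envelopes_slow (α : ℝ) (hα0 : 0 < α) (hα1 : α < 1 / 2)
    (y x₀ T : ℝ) (hy : 0 < y) (hT : 1 < T) (x : ℝ → ℝ) (hx1 : x 1 = x₀)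
    (hx : ∀ t ∈ Set.Ico (1:ℝ) T,
      HasDerivAt x (y * t ^ (-(2 * α)) / Real.sqrt (1 + y ^ 2 * t ^ (-(2 * α)))) t) :
    (∀ t ∈ Set.Ico (1:ℝ) T,
      x₀ + (y / Real.sqrt (1 + y ^ 2)) * (t ^ (1 - 2 * α) - 1) / (1 - 2 * α) ≤ x t
      ∧ x t ≤ x₀ + y * (t ^ (1 - 2 * α) - 1) / (1 - 2 * α))
    ∧ ∀ x₁ x₂ u₁ u₂ : ℝ, x₁ < x₂ → u₂ < u₁ → 0 < u₂ →
        u₂ < u₁ / Real.sqrt (1 + u₁ ^ 2) →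
        ∃ t₀, 1 ≤ t₀ ∧ ∀ t, t₀ ≤ t →
          x₂ + u₂ * (t ^ (1 - 2 * α) - 1) / (1 - 2 * α)
            < x₁ + (u₁ / Real.sqrt (1 + u₁ ^ 2)) * (t ^ (1 - 2 * α) - 1) / (1 - 2 * α) := by
  have hβ : 0 < 1 - 2 * α := by linarith
  constructor
  · intro t ht
    obtain ⟨ht1, htT⟩ := ht
    -- derivative of envelopes
    have henv : ∀ (c s : ℝ), 0 < s →
        HasDerivAt (fun s => x₀ + c * (s ^ (1 - 2 * α) - 1) / (1 - 2 * α))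
          (c * s ^ (-(2 * α))) s := by
      intro c s hs
      have h1 : HasDerivAt (fun s : ℝ => s ^ (1 - 2 * α))
          ((1 - 2 * α) * s ^ (1 - 2 * α - 1)) s :=
        Real.hasDerivAt_rpow_const (Or.inl hs.ne')
      have h1' : HasDerivAt (fun s : ℝ => s ^ (1 - 2 * α))
          ((1 - 2 * α) * s ^ (-(2 * α))) s := by
        convert h1 using 2; ring_nf
      have h3 := (((h1'.sub_const 1).const_mul c).div_const (1 - 2 * α)).const_add x₀
      refine h3.congr_deriv ?_
      rw [div_eq_iff hβ.ne']
      ring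
    -- derivative comparison on [1, t]
    have hIcc : Set.Icc (1:ℝ) t ⊆ Set.Ico (1:ℝ) T := fun s hs =>
      ⟨hs.1, lt_of_le_of_lt hs.2 htT⟩
    have key : ∀ s ∈ Set.Icc (1:ℝ) t,
        (y / Real.sqrt (1 + y ^ 2)) * s ^ (-(2 * α))
          ≤ y * s ^ (-(2 * α)) / Real.sqrt (1 + y ^ 2 * s ^ (-(2 * α)))
        ∧ y * s ^ (-(2 * α)) / Real.sqrt (1 + y ^ 2 * s ^ (-(2 * α)))
          ≤ y * s ^ (-(2 * α)) := by
      intro s hs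
      have hs1 : (1:ℝ) ≤ s := hs.1
      have hs0 : (0:ℝ) < s := lt_of_lt_of_le one_pos hs1
      have hp : 0 < s ^ (-(2 * α)) := Real.rpow_pos_of_pos hs0 _
      have hple : s ^ (-(2 * α)) ≤ 1 :=
        Real.rpow_le_one_of_one_le_of_nonpos hs1 (by linarith)
      have hsq1 : 1 ≤ Real.sqrt (1 + y ^ 2 * s ^ (-(2 * α))) := by
        rw [Real.one_le_sqrt]
        nlinarith
      have hsqle : Real.sqrt (1 + y ^ 2 * s ^ (-(2 * α))) ≤ Real.sqrt (1 + y ^ 2) :=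
        Real.sqrt_le_sqrt (by nlinarith)
      have hsqpos : 0 < Real.sqrt (1 + y ^ 2 * s ^ (-(2 * α))) := lt_of_lt_of_le one_pos hsq1
      constructor
      · rw [div_mul_eq_mul_div]
        exact div_le_div_of_nonneg_left (by positivity) hsqpos hsqle
      · exact div_le_self (by positivity) hsq1
    have henv1 : ∀ c : ℝ, x₀ + c * ((1:ℝ) ^ (1 - 2 * α) - 1) / (1 - 2 * α) = x₀ := by
      intro c; rw [Real.one_rpow]; ring
    constructor
    · exact deriv_le_of_le_aux ht1
        (fun s hs => henv (y / Real.sqrt (1 + y ^ 2)) s (lt_of_lt_of_le one_pos hs.1))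
        (fun s hs => hx s (hIcc hs))
        (fun s hs => (key s hs).1)
        (by rw [henv1, hx1])
    · exact deriv_le_of_le_aux ht1
        (fun s hs => hx s (hIcc hs))
        (fun s hs => henv y s (lt_of_lt_of_le one_pos hs.1))
        (fun s hs => (key s hs).2)
        (by rw [henv1, hx1])
  · intro x₁ x₂ u₁ u₂ h12 hu hu2 hc
    set c := u₁ / Real.sqrt (1 + u₁ ^ 2) with hcdef
    have hcu : 0 < c - u₂ := by linarith
    obtain ⟨A, hA⟩ : ∃ A : ℝ, A = 2 + (x₂ - x₁) * (1 - 2 * α) / (c - u₂) := ⟨_, rfl⟩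
    have hA1 : 1 ≤ A := by
      have : 0 ≤ (x₂ - x₁) * (1 - 2 * α) / (c - u₂) :=
        div_nonneg (mul_nonneg (by linarith) hβ.le) hcu.le
      rw [hA]; linarith
    have hApos : 0 < A := lt_of_lt_of_le one_pos hA1
    refine ⟨A ^ (1 - 2 * α)⁻¹, ?_, ?_⟩
    · calc (1:ℝ) = 1 ^ (1 - 2 * α)⁻¹ := (Real.one_rpow _).symm
        _ ≤ A ^ (1 - 2 * α)⁻¹ := Real.rpow_le_rpow zero_le_one hA1 (by positivity)
    · intro t htt
      have ht0 : (0:ℝ) ≤ A ^ (1 - 2 * α)⁻¹ := by positivity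
      have hAt : A ≤ t ^ (1 - 2 * α) := by
        calc A = (A ^ (1 - 2 * α)⁻¹) ^ (1 - 2 * α) := by
              rw [← Real.rpow_mul hApos.le, inv_mul_cancel₀ hβ.ne', Real.rpow_one]
          _ ≤ t ^ (1 - 2 * α) := Real.rpow_le_rpow ht0 htt hβ.le
      have hkey : (c - u₂) * ((x₂ - x₁) * (1 - 2 * α) / (c - u₂)) = (x₂ - x₁) * (1 - 2 * α) := by
        field_simp
      have hCA : (c - u₂) * A = (c - u₂) * 2 + (x₂ - x₁) * (1 - 2 * α) := by
        rw [hA, mul_add, hkey]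
      have h1 : (x₂ - x₁) * (1 - 2 * α) < (c - u₂) * (t ^ (1 - 2 * α) - 1) := by
        nlinarith [mul_le_mul_of_nonneg_left hAt hcu.le, hCA, hcu]
      have h2 : x₂ - x₁ < (c - u₂) * (t ^ (1 - 2 * α) - 1) / (1 - 2 * α) := by
        rw [lt_div_iff₀ hβ]; linarith
      have h3 : (c - u₂) * (t ^ (1 - 2 * α) - 1) / (1 - 2 * α)
          = c * (t ^ (1 - 2 * α) - 1) / (1 - 2 * α)
            - u₂ * (t ^ (1 - 2 * α) - 1) / (1 - 2 * α) := by ring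
      linarith [h3 ▸ h2]
end
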